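/- arXiv:1206.6317 — 4 statements merged into one kernel-verified Lean document; each statement's English description precedes it below -/
import Mathlib

section
/- With the same setup of n-point interval evaluations and (i,k)-dominance, if i ≤ k then the relation Δ^{(i,k)} is transitive: a Δ^{(i,k)} b and b Δ^{(i,k)} c imply a Δ^{(i,k)} c. -/
theorem stmt_1 {A : Type*} {m n : ℕ} (g : A → Fin m → Fin n → ℝ)
    (hg : ∀ a j, Monotone (g a j)) (i k : Fin n) (hik : i ≤ k) :
    Transitive (fun a b : A => ∀ j, g b j k ≤ g a j i) := by
  intro a b c hab hbc j
  exact (hbc j).trans ((hg b j hik).trans (hab j))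
end

section
/- With 𝒰 a nonempty set of value functions built from nondecreasing sub-marginal functions: if i ≥ k, then the possible preference relation ≿^P_{(i,k)} (a ≿^P_{(i,k)} b iff U(a^{(i)}) ≥ U(b^{(k)}) for some U ∈ 𝒰) is strongly complete and negatively transitive. -/
theorem stmt_17 {A : Type*} {m n : ℕ} (g : A → Fin m → Fin n → ℝ)
    (hg : ∀ a j, Monotone (g a j))
    (𝒰 : Set (Fin m → Fin n → ℝ → ℝ)) (h𝒰 : 𝒰.Nonempty)
    (hmono : ∀ u ∈ 𝒰, ∀ j r, Monotone (u j r))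
    (i k : Fin n) (hik : k ≤ i) :
    (∀ a b : A,
      (∃ u ∈ 𝒰, (∑ j, ∑ r, u j r (g b j k)) ≤ ∑ j, ∑ r, u j r (g a j i)) ∨
      (∃ u ∈ 𝒰, (∑ j, ∑ r, u j r (g a j k)) ≤ ∑ j, ∑ r, u j r (g b j i))) ∧
    (∀ a b c : A,
      ¬ (∃ u ∈ 𝒰, (∑ j, ∑ r, u j r (g b j k)) ≤ ∑ j, ∑ r, u j r (g a j i)) →
      ¬ (∃ u ∈ 𝒰, (∑ j, ∑ r, u j r (g c j k)) ≤ ∑ j, ∑ r, u j r (g b j i)) →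
      ¬ (∃ u ∈ 𝒰, (∑ j, ∑ r, u j r (g c j k)) ≤ ∑ j, ∑ r, u j r (g a j i))) := by
  have key : ∀ u ∈ 𝒰, ∀ a : A,
      (∑ j, ∑ r, u j r (g a j k)) ≤ ∑ j, ∑ r, u j r (g a j i) := by
    intro u hu a
    refine Finset.sum_le_sum fun j _ => Finset.sum_le_sum fun r _ => ?_
    exact hmono u hu j r (hg a j hik)
  constructor
  · intro a b
    obtain ⟨u, hu⟩ := h𝒰
    rcases le_total (∑ j, ∑ r, u j r (g b j k)) (∑ j, ∑ r, u j r (g a j i)) with h | h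
    · exact Or.inl ⟨u, hu, h⟩
    · exact Or.inr ⟨u, hu, (key u hu a).trans (h.trans (key u hu b))⟩
  · intro a b c hab hbc ⟨u, hu, hca⟩
    push_neg at hab
    exact hbc ⟨u, hu, hca.trans ((hab u hu).le.trans (key u hu b))⟩
end

section
/- With 𝒰 a nonempty set of value functions built from nondecreasing sub-marginal functions: if i₁ ≥ i and k₁ ≤ k, then ≿^N_{(i,k)} ⊆ ≿^N_{(i₁,k₁)} and ≿^P_{(i,k)} ⊆ ≿^P_{(i₁,k₁)}. -/
theorem stmt_18 {A : Type*} {m n : ℕ} (g : A → Fin m → Fin n → ℝ)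
    (hg : ∀ a j, Monotone (g a j))
    (𝒰 : Set (Fin m → Fin n → ℝ → ℝ)) (h𝒰 : 𝒰.Nonempty)
    (hmono : ∀ u ∈ 𝒰, ∀ j r, Monotone (u j r))
    (i k i₁ k₁ : Fin n) (hi : i ≤ i₁) (hk : k₁ ≤ k) (a b : A) :
    ((∀ u ∈ 𝒰, (∑ j, ∑ r, u j r (g b j k)) ≤ ∑ j, ∑ r, u j r (g a j i)) →
      ∀ u ∈ 𝒰, (∑ j, ∑ r, u j r (g b j k₁)) ≤ ∑ j, ∑ r, u j r (g a j i₁)) ∧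
    ((∃ u ∈ 𝒰, (∑ j, ∑ r, u j r (g b j k)) ≤ ∑ j, ∑ r, u j r (g a j i)) →
      ∃ u ∈ 𝒰, (∑ j, ∑ r, u j r (g b j k₁)) ≤ ∑ j, ∑ r, u j r (g a j i₁)) := by
  have key : ∀ u ∈ 𝒰, (∑ j, ∑ r, u j r (g b j k)) ≤ ∑ j, ∑ r, u j r (g a j i) →
      (∑ j, ∑ r, u j r (g b j k₁)) ≤ ∑ j, ∑ r, u j r (g a j i₁) := by
    intro u hu h
    calc (∑ j, ∑ r, u j r (g b j k₁)) ≤ ∑ j, ∑ r, u j r (g b j k) := by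
          apply Finset.sum_le_sum; intro j _; apply Finset.sum_le_sum; intro r _
          exact hmono u hu j r (hg b j hk)
      _ ≤ ∑ j, ∑ r, u j r (g a j i) := h
      _ ≤ ∑ j, ∑ r, u j r (g a j i₁) := by
          apply Finset.sum_le_sum; intro j _; apply Finset.sum_le_sum; intro r _
          exact hmono u hu j r (hg a j hi)
  exact ⟨fun h u hu => key u hu (h u hu), fun ⟨u, hu, h⟩ => ⟨u, hu, key u hu h⟩⟩
end

section
/- With 𝒰 a nonempty set of value functions built from nondecreasing sub-marginal functions: the strong necessary preference ≿^N_{(1,n)} is contained in the necessary preference ≿^N (a ≿^N b iff U(a) ≥ U(b) for all U ∈ 𝒰, where U(a) = Σ_j Σ_i u_{j,i}(g_j^i(a))), which is in turn contained in the weak necessary preference ≿^N_{(n,1)}. -/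
theorem stmt_19 {A : Type*} {m n : ℕ} (g : A → Fin m → Fin (n + 1) → ℝ)
    (hg : ∀ a j, Monotone (g a j))
    (𝒰 : Set (Fin m → Fin (n + 1) → ℝ → ℝ)) (h𝒰 : 𝒰.Nonempty)
    (hmono : ∀ u ∈ 𝒰, ∀ j i, Monotone (u j i))
    (a b : A) :
    ((∀ u ∈ 𝒰, (∑ j, ∑ r, u j r (g b j (Fin.last n))) ≤ ∑ j, ∑ r, u j r (g a j 0)) →
      ∀ u ∈ 𝒰, (∑ j, ∑ i, u j i (g b j i)) ≤ ∑ j, ∑ i, u j i (g a j i)) ∧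
    ((∀ u ∈ 𝒰, (∑ j, ∑ i, u j i (g b j i)) ≤ ∑ j, ∑ i, u j i (g a j i)) →
      ∀ u ∈ 𝒰, (∑ j, ∑ r, u j r (g b j 0)) ≤ ∑ j, ∑ r, u j r (g a j (Fin.last n))) := by
  have key1 : ∀ u ∈ 𝒰, ∀ c : A,
      (∑ j, ∑ i, u j i (g c j 0)) ≤ ∑ j, ∑ i, u j i (g c j i) := by
    intro u hu c
    refine Finset.sum_le_sum fun j _ => Finset.sum_le_sum fun i _ => ?_
    exact hmono u hu j i (hg c j (Fin.zero_le i))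
  have key2 : ∀ u ∈ 𝒰, ∀ c : A,
      (∑ j, ∑ i, u j i (g c j i)) ≤ ∑ j, ∑ i, u j i (g c j (Fin.last n)) := by
    intro u hu c
    refine Finset.sum_le_sum fun j _ => Finset.sum_le_sum fun i _ => ?_
    exact hmono u hu j i (hg c j (Fin.le_last i))
  constructor
  · intro h u hu
    exact le_trans (key2 u hu b) (le_trans (h u hu) (key1 u hu a))
  · intro h u hu
    exact le_trans (key1 u hu b) (le_trans (h u hu) (key2 u hu a))
end
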